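/- arXiv:1612.00681 — 3 statements merged into one kernel-verified Lean document; each statement's English description precedes it below -/
import Mathlib

section
/- Let M = (m_{kl}) be a p×p matrix with positive entries satisfying (1/b) ≤ m_{ij}/m_{kl} ≤ b for all i,j,k,l (b > 1), let A be a p×p matrix with nonnegative entries and |A| > 0, and let v be a vector with nonnegative coordinates. Then |AMv| ≥ (|A||M|/(b p²)) |v|, where |v| = Σᵢ vᵢ and |AMv| is the L¹ norm of the vector AMv. -/
open Matrix Finset

/-- Sum of all entries of a matrix ("norm" `|A|`). -/
noncomputable def mnorm {p : ℕ} (A : Matrix (Fin p) (Fin p) ℝ) : ℝ := ∑ i, ∑ j, A i j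

/-- L¹ norm of a nonnegative vector. -/
noncomputable def vnorm {p : ℕ} (v : Fin p → ℝ) : ℝ := ∑ i, |v i|

/-!
If all ratios of entries of `M` are at most `b`, then `|M|` is at most `b p²` times any single
entry, so every entry of `M` is at least `c = |M| / (b p²)`. Hence every column sum of `AM` is at
least `|A| c`, and for nonnegative `v` the `L¹` norm of `AMv` is the sum of the column sums of
`AM` weighted by the coordinates of `v`.
-/

section

variable {m n o : Type*} [Fintype m] [Fintype n]

theorem sum_div_le_apply_of_div_le (M : Matrix m n ℝ) (hMpos : ∀ i j, 0 < M i j) {b : ℝ}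
    (hratio : ∀ i j k l, M i j / M k l ≤ b) (k : m) (l : n) :
    (∑ i, ∑ j, M i j) / (b * (Fintype.card m * Fintype.card n)) ≤ M k l := by
  have hb : 1 ≤ b := by simpa [(hMpos k l).ne'] using hratio k l k l
  have hentry : ∀ i j, M i j ≤ b * M k l := fun i j =>
    (div_le_iff₀ (hMpos k l)).1 (hratio i j k l)
  have hcard : (0 : ℝ) < Fintype.card m * Fintype.card n := by
    have : Nonempty m := ⟨k⟩
    have : Nonempty n := ⟨l⟩
    positivity
  rw [div_le_iff₀ (by positivity)]
  calc ∑ i, ∑ j, M i j ≤ ∑ _i : m, ∑ _j : n, b * M k l :=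
        sum_le_sum fun i _ => sum_le_sum fun j _ => hentry i j
    _ = M k l * (b * (Fintype.card m * Fintype.card n)) := by
        simp only [sum_const, card_univ, nsmul_eq_mul]
        ring

theorem sum_mul_le_sum_mul_apply (A : Matrix m n ℝ) (hA : ∀ i j, 0 ≤ A i j) (M : Matrix n o ℝ)
    {c : ℝ} (hc : ∀ j k, c ≤ M j k) (k : o) :
    (∑ i, ∑ j, A i j) * c ≤ ∑ i, (A * M) i k := by
  simp only [mul_apply, sum_mul]
  exact sum_le_sum fun i _ => sum_le_sum fun j _ => mul_le_mul_of_nonneg_left (hc j k) (hA i j)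

theorem mul_sum_abs_le_sum_abs_mulVec (N : Matrix m n ℝ) (hN : ∀ i k, 0 ≤ N i k)
    (v : n → ℝ) (hv : ∀ k, 0 ≤ v k) {c : ℝ} (hc : ∀ k, c ≤ ∑ i, N i k) :
    c * ∑ k, |v k| ≤ ∑ i, |(N *ᵥ v) i| := by
  have hNv : ∀ i, 0 ≤ (N *ᵥ v) i := fun i =>
    sum_nonneg fun k _ => mul_nonneg (hN i k) (hv k)
  calc c * ∑ k, |v k| = ∑ k, c * v k := by
        rw [mul_sum]
        exact sum_congr rfl fun k _ => by rw [abs_of_nonneg (hv k)]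
    _ ≤ ∑ k, (∑ i, N i k) * v k := sum_le_sum fun k _ => mul_le_mul_of_nonneg_right (hc k) (hv k)
    _ = ∑ i, (N *ᵥ v) i := by
        simp only [mulVec, dotProduct, sum_mul]
        exact sum_comm
    _ = ∑ i, |(N *ᵥ v) i| := sum_congr rfl fun i _ => (abs_of_nonneg (hNv i)).symm

end

theorem stmt_2_general {p : ℕ} (b : ℝ)
    (M : Matrix (Fin p) (Fin p) ℝ) (hMpos : ∀ i j, 0 < M i j)
    (hratio : ∀ i j k l, 1 / b ≤ M i j / M k l ∧ M i j / M k l ≤ b)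
    (A : Matrix (Fin p) (Fin p) ℝ) (hA : ∀ i j, 0 ≤ A i j)
    (v : Fin p → ℝ) (hv : ∀ i, 0 ≤ v i) :
    mnorm A * mnorm M / (b * (p : ℝ) ^ 2) * vnorm v ≤ vnorm ((A * M).mulVec v) := by
  have hM : ∀ j k, mnorm M / (b * (p : ℝ) ^ 2) ≤ M j k := fun j k => by
    simpa [mnorm, sq] using
      sum_div_le_apply_of_div_le M hMpos (fun i j k l => (hratio i j k l).2) j k
  have hAM : ∀ i k, 0 ≤ (A * M) i k := fun i k => by
    rw [mul_apply]
    exact sum_nonneg fun j _ => mul_nonneg (hA i j) (hMpos j k).le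
  calc mnorm A * mnorm M / (b * (p : ℝ) ^ 2) * vnorm v
        = mnorm A * (mnorm M / (b * (p : ℝ) ^ 2)) * vnorm v := by ring
    _ ≤ vnorm ((A * M) *ᵥ v) :=
        mul_sum_abs_le_sum_abs_mulVec (A * M) hAM v hv
          (sum_mul_le_sum_mul_apply A hA M hM)

/-- `|AMv| ≥ (|A||M|/(b p²)) |v|` for nonnegative `A`, `v` and `M` with bounded ratios. -/
theorem stmt_2 {p : ℕ} (hp : 1 ≤ p) (b : ℝ) (hb : 1 < b)
    (M : Matrix (Fin p) (Fin p) ℝ) (hMpos : ∀ i j, 0 < M i j)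
    (hratio : ∀ i j k l, 1 / b ≤ M i j / M k l ∧ M i j / M k l ≤ b)
    (A : Matrix (Fin p) (Fin p) ℝ) (hA : ∀ i j, 0 ≤ A i j) (hAnorm : 0 < mnorm A)
    (v : Fin p → ℝ) (hv : ∀ i, 0 ≤ v i) :
    mnorm A * mnorm M / (b * (p : ℝ) ^ 2) * vnorm v ≤ vnorm ((A * M).mulVec v) :=
  stmt_2_general b M hMpos hratio A hA v hv
end

section
/- Let H be a probability generating function of a nonnegative-integer-valued random variable, i.e. H(z) = Σ_{k≥0} p_k z^k with p_k ≥ 0, Σ p_k = 1, and suppose H'(1) > 0 and H''(1) < ∞. Then for all z ∈ [0,1) with H(z) < 1, one has 0 ≤ 1/(1 − H(z)) − 1/(H'(1)(1 − z)) ≤ H''(1)/(H'(1))². -/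
/-!
Let `U k = geomSum z k = 1 + z + ⋯ + z^(k-1)` and `T k = geomSumSum z k = U 0 + ⋯ + U (k-1)`.
With `m = H'(1)`, `b = H''(1)`, `A = Σ p_k U k` and `C = Σ p_k T k` one has
`1 - H(z) = (1 - z) A` and `m - A = (1 - z) C`, so the gap equals `C / (A m) ≥ 0`, and the upper
bound is `m C ≤ b A`. This follows by symmetrising the double series over `(k, l)`: since
`U k / k` is nonincreasing in `k`, every pair satisfies `k T l + l T k ≤ k (k-1) U l + l (l-1) U k`.
-/

open Finset

section GeomSum

variable {R : Type*} [CommRing R]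

def geomSum (z : R) (k : ℕ) : R := ∑ i ∈ range k, z ^ i

def geomSumSum (z : R) (k : ℕ) : R := ∑ j ∈ range k, geomSum z j

lemma geomSum_succ (z : R) (k : ℕ) : geomSum z (k + 1) = geomSum z k + z ^ k :=
  sum_range_succ _ k

lemma geomSumSum_succ (z : R) (k : ℕ) : geomSumSum z (k + 1) = geomSumSum z k + geomSum z k :=
  sum_range_succ _ k

lemma one_sub_mul_geomSum (z : R) (k : ℕ) : (1 - z) * geomSum z k = 1 - z ^ k :=
  mul_neg_geom_sum z k

lemma one_sub_mul_geomSumSum (z : R) (k : ℕ) : (1 - z) * geomSumSum z k = k - geomSum z k := by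
  induction k with
  | zero => simp [geomSumSum, geomSum]
  | succ k ih =>
    rw [geomSumSum_succ, geomSum_succ, mul_add, ih, one_sub_mul_geomSum]
    push_cast
    ring

variable [LinearOrder R] [IsStrictOrderedRing R] {z : R}

lemma geomSum_nonneg (hz : 0 ≤ z) (k : ℕ) : 0 ≤ geomSum z k :=
  sum_nonneg fun i _ => pow_nonneg hz i

lemma geomSumSum_nonneg (hz : 0 ≤ z) (k : ℕ) : 0 ≤ geomSumSum z k :=
  sum_nonneg fun j _ => geomSum_nonneg hz j

lemma geomSum_le (hz0 : 0 ≤ z) (hz1 : z ≤ 1) (k : ℕ) : geomSum z k ≤ k := by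
  simpa [geomSum] using sum_le_card_nsmul (range k) (z ^ ·) 1 fun i _ => pow_le_one₀ hz0 hz1

lemma geomSum_mono (hz : 0 ≤ z) {l k : ℕ} (h : l ≤ k) : geomSum z l ≤ geomSum z k :=
  sum_le_sum_of_subset_of_nonneg (range_subset_range.2 h) fun i _ _ => pow_nonneg hz i

lemma geomSumSum_le (hz : 0 ≤ z) (k : ℕ) : geomSumSum z k ≤ (k - 1) * geomSum z k := by
  induction k with
  | zero => simp [geomSumSum, geomSum]
  | succ k ih =>
    rw [geomSumSum_succ]
    push_cast
    nlinarith [geomSum_mono hz k.le_succ, (Nat.cast_nonneg k : (0 : R) ≤ k)]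

lemma geomSumSum_le_mul (hz0 : 0 ≤ z) (hz1 : z ≤ 1) (k : ℕ) :
    geomSumSum z k ≤ k * (k - 1) := by
  rcases k.eq_zero_or_pos with rfl | hk
  · simp [geomSumSum]
  · have hk1 : (1 : R) ≤ k := by exact_mod_cast hk
    nlinarith [geomSumSum_le hz0 k, geomSum_le hz0 hz1 k]

/-- `geomSum z k / k` is the mean of the nonincreasing sequence `z ^ i`, `i < k`, hence
nonincreasing in `k`. -/
lemma mul_geomSum_le_mul_geomSum (hz0 : 0 ≤ z) (hz1 : z ≤ 1) {l k : ℕ} (h : l ≤ k) :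
    l * geomSum z k ≤ k * geomSum z l := by
  have hsplit : geomSum z k - geomSum z l = ∑ i ∈ Ico l k, z ^ i := by
    rw [sum_Ico_eq_sub _ h, geomSum, geomSum]
  have htail : ∑ i ∈ Ico l k, z ^ i ≤ (k - l : R) * z ^ l := by
    have := sum_le_card_nsmul (Ico l k) (z ^ ·) (z ^ l) fun i hi =>
      pow_le_pow_of_le_one hz0 hz1 (mem_Ico.1 hi).1
    rwa [Nat.card_Ico, nsmul_eq_mul, Nat.cast_sub h] at this
  have hhead : (l : R) * z ^ l ≤ geomSum z l := by
    have := card_nsmul_le_sum (range l) (z ^ ·) (z ^ l) fun i hi =>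
      pow_le_pow_of_le_one hz0 hz1 (mem_range.1 hi).le
    rwa [card_range, nsmul_eq_mul] at this
  have hlk : (l : R) ≤ k := Nat.cast_le.2 h
  nlinarith [mul_nonneg (sub_nonneg.2 hlk) (sub_nonneg.2 hhead),
    mul_nonneg (Nat.cast_nonneg l : (0 : R) ≤ l) (sub_nonneg.2 htail)]

lemma geomSumSum_symm_le (hz0 : 0 ≤ z) (hz1 : z ≤ 1) (k l : ℕ) :
    k * geomSumSum z l + l * geomSumSum z k ≤
      k * (k - 1) * geomSum z l + l * (l - 1) * geomSum z k := by
  wlog h : l ≤ k generalizing k l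
  · linarith [this l k (le_of_not_ge h)]
  have hlk : (l : R) ≤ k := Nat.cast_le.2 h
  nlinarith [mul_le_mul_of_nonneg_left (geomSumSum_le hz0 l) (Nat.cast_nonneg k : (0 : R) ≤ k),
    mul_le_mul_of_nonneg_left (geomSumSum_le hz0 k) (Nat.cast_nonneg l : (0 : R) ≤ l),
    mul_nonneg (sub_nonneg.2 hlk) (sub_nonneg.2 (mul_geomSum_le_mul_geomSum hz0 hz1 h))]

end GeomSum

lemma natCast_mul_natCast_sub_one_nonneg {R : Type*} [CommRing R] [LinearOrder R]
    [IsStrictOrderedRing R] (k : ℕ) : 0 ≤ (k : R) * (k - 1) := by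
  rcases k with _ | k
  · simp
  · push_cast
    simp only [add_sub_cancel_right]
    positivity

/-- Symmetrisation: the product of two series of nonnegative terms is the half-sum of the double
series over `(i, j)` and `(j, i)`. -/
lemma tsum_mul_tsum_le_of_symm {ι : Type*} {a d c e : ι → ℝ}
    (ha : Summable a) (hd : Summable d) (hc : Summable c) (he : Summable e)
    (ha0 : 0 ≤ a) (hd0 : 0 ≤ d) (hc0 : 0 ≤ c) (he0 : 0 ≤ e)
    (h : ∀ i j, a i * d j + a j * d i ≤ c i * e j + c j * e i) :
    (∑' i, a i) * ∑' i, d i ≤ (∑' i, c i) * ∑' i, e i := by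
  have had := ha.mul_of_nonneg hd ha0 hd0
  have hce := hc.mul_of_nonneg he hc0 he0
  have had' : Summable fun p : ι × ι => a p.2 * d p.1 := had.prod_symm
  have hce' : Summable fun p : ι × ι => c p.2 * e p.1 := hce.prod_symm
  have swap (f : ι → ι → ℝ) : ∑' p : ι × ι, f p.2 p.1 = ∑' p : ι × ι, f p.1 p.2 :=
    (Equiv.prodComm ι ι).tsum_eq fun p => f p.1 p.2
  have key := Summable.tsum_le_tsum (fun p : ι × ι => h p.1 p.2) (had.add had') (hce.add hce')
  rw [had.tsum_add had', hce.tsum_add hce', swap fun i j => a i * d j,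
    swap fun i j => c i * e j] at key
  rw [ha.tsum_mul_tsum hd had, hc.tsum_mul_tsum he hce]
  linarith

lemma one_div_sub_one_div_bounds {A C m b z : ℝ} (hA : 0 < A) (hm : 0 < m) (hz : z < 1)
    (hC : 0 ≤ C) (hmA : m - A = (1 - z) * C) (hmC : m * C ≤ b * A) :
    0 ≤ 1 / ((1 - z) * A) - 1 / (m * (1 - z)) ∧
      1 / ((1 - z) * A) - 1 / (m * (1 - z)) ≤ b / m ^ 2 := by
  have hgap : 1 / ((1 - z) * A) - 1 / (m * (1 - z)) = C / (A * m) := by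
    have : 1 - z ≠ 0 := by linarith
    field_simp
    linear_combination hmA
  rw [hgap]
  refine ⟨by positivity, ?_⟩
  rw [div_le_div_iff₀ (by positivity) (by positivity)]
  nlinarith

section Series

variable {q : ℕ → ℝ} {z : ℝ}

lemma summable_mul_geomSum (hq : ∀ k, 0 ≤ q k) (hz0 : 0 ≤ z) (hz1 : z ≤ 1)
    (hm1 : Summable fun k : ℕ => (k : ℝ) * q k) : Summable fun k => q k * geomSum z k :=
  hm1.of_nonneg_of_le (fun k => mul_nonneg (hq k) (geomSum_nonneg hz0 k))
    fun k => by rw [mul_comm]; exact mul_le_mul_of_nonneg_right (geomSum_le hz0 hz1 k) (hq k)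

lemma summable_mul_geomSumSum (hq : ∀ k, 0 ≤ q k) (hz0 : 0 ≤ z) (hz1 : z ≤ 1)
    (hm2 : Summable fun k : ℕ => (k : ℝ) * ((k : ℝ) - 1) * q k) :
    Summable fun k => q k * geomSumSum z k :=
  hm2.of_nonneg_of_le (fun k => mul_nonneg (hq k) (geomSumSum_nonneg hz0 k))
    fun k => by rw [mul_comm]; exact mul_le_mul_of_nonneg_right (geomSumSum_le_mul hz0 hz1 k) (hq k)

lemma tsum_mul_pow_eq (hqs : Summable q) (hU : Summable fun k => q k * geomSum z k) :
    ∑' k, q k * z ^ k = ∑' k, q k - (1 - z) * ∑' k, q k * geomSum z k := by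
  have hpow (k : ℕ) : q k * z ^ k = q k - (1 - z) * (q k * geomSum z k) := by
    rw [mul_left_comm, one_sub_mul_geomSum]
    ring
  rw [tsum_congr hpow, hqs.tsum_sub (hU.mul_left _), tsum_mul_left]

lemma tsum_natCast_mul_sub_tsum_mul_geomSum (hm1 : Summable fun k : ℕ => (k : ℝ) * q k)
    (hU : Summable fun k => q k * geomSum z k) :
    ∑' k : ℕ, (k : ℝ) * q k - ∑' k, q k * geomSum z k
      = (1 - z) * ∑' k, q k * geomSumSum z k := by
  rw [← hm1.tsum_sub hU, ← tsum_mul_left]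
  congr! 2 with k
  linear_combination (-q k) * one_sub_mul_geomSumSum z k

lemma tsum_natCast_mul_mul_tsum_mul_geomSumSum_le (hq : ∀ k, 0 ≤ q k) (hz0 : 0 ≤ z)
    (hz1 : z ≤ 1) (hm1 : Summable fun k : ℕ => (k : ℝ) * q k)
    (hm2 : Summable fun k : ℕ => (k : ℝ) * ((k : ℝ) - 1) * q k) :
    (∑' k : ℕ, (k : ℝ) * q k) * ∑' k, q k * geomSumSum z k
      ≤ (∑' k : ℕ, (k : ℝ) * ((k : ℝ) - 1) * q k) * ∑' k, q k * geomSum z k := by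
  refine tsum_mul_tsum_le_of_symm hm1 (summable_mul_geomSumSum hq hz0 hz1 hm2) hm2
    (summable_mul_geomSum hq hz0 hz1 hm1) (fun k => mul_nonneg k.cast_nonneg (hq k))
    (fun k => mul_nonneg (hq k) (geomSumSum_nonneg hz0 k))
    (fun k => mul_nonneg (natCast_mul_natCast_sub_one_nonneg k) (hq k))
    (fun k => mul_nonneg (hq k) (geomSum_nonneg hz0 k)) fun k l => ?_
  linear_combination mul_le_mul_of_nonneg_left (geomSumSum_symm_le hz0 hz1 k l)
    (mul_nonneg (hq k) (hq l))

end Series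

/-- Basic generating-function inequality: for a probability generating function
`H(z) = Σ p_k z^k` with `H'(1) > 0` and `H''(1) < ∞`, one has
`0 ≤ 1/(1 − H(z)) − 1/(H'(1)(1 − z)) ≤ H''(1)/H'(1)²` for `z ∈ [0,1)` with `H(z) < 1`. -/
theorem stmt_3 (q : ℕ → ℝ) (hq : ∀ k, 0 ≤ q k) (hsum : ∑' k, q k = 1)
    (hm1sum : Summable fun k : ℕ => (k : ℝ) * q k)
    (hm2sum : Summable fun k : ℕ => (k : ℝ) * ((k : ℝ) - 1) * q k)
    (hm1pos : 0 < ∑' k : ℕ, (k : ℝ) * q k)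
    (z : ℝ) (hz0 : 0 ≤ z) (hz1 : z < 1)
    (H : ℝ → ℝ) (hH : ∀ t, H t = ∑' k, q k * t ^ k)
    (hHz : H z < 1) :
    0 ≤ 1 / (1 - H z) - 1 / ((∑' k : ℕ, (k : ℝ) * q k) * (1 - z)) ∧
      1 / (1 - H z) - 1 / ((∑' k : ℕ, (k : ℝ) * q k) * (1 - z)) ≤
        (∑' k : ℕ, (k : ℝ) * ((k : ℝ) - 1) * q k) / (∑' k : ℕ, (k : ℝ) * q k) ^ 2 := by
  have hqs : Summable q := by
    by_contra h
    simp [tsum_eq_zero_of_not_summable h] at hsum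
  have hU := summable_mul_geomSum hq hz0 hz1.le hm1sum
  have h1H : 1 - H z = (1 - z) * ∑' k, q k * geomSum z k := by
    rw [hH, tsum_mul_pow_eq hqs hU, hsum]
    ring
  have hA : 0 < ∑' k, q k * geomSum z k :=
    pos_of_mul_pos_right (h1H ▸ sub_pos.2 hHz) (sub_pos.2 hz1).le
  rw [h1H]
  exact one_div_sub_one_div_bounds hA hm1pos hz1
    (tsum_nonneg fun k => mul_nonneg (hq k) (geomSumSum_nonneg hz0 k))
    (tsum_natCast_mul_sub_tsum_mul_geomSum hm1sum hU)
    (tsum_natCast_mul_mul_tsum_mul_geomSumSum_le hq hz0 hz1.le hm1sum hm2sum)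
end

section
/- Under the same setup, the following telescoping identity holds for any s ∈ [0,1]ᵖ with all denominators nonzero: 1/(x, 1 − f_{0,n}(s)) = e^{−ln|AR_n(1−s)|} + Σ_{k=0}^{n−1} ψ_k(f_{k+1,n}(s)) e^{−ln|xR_k|}, where A is the diagonal matrix with diagonal x, and ψ_k(t) := |AR_k|/|AR_k(1 − f_k(t))| − |AR_k|/|AR_kM_k(1 − t)|. -/
open Finset Matrix

/-- Multivariate probability generating function of a measure `Φ` on `ℕ₀ᵖ`. -/
noncomputable def pgf {p : ℕ} (Φ : (Fin p → ℕ) → ℝ) (s : Fin p → ℝ) : ℝ :=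
  ∑' z : Fin p → ℕ, Φ z * ∏ j, s j ^ z j

/-- Mean matrix of a vector of generating functions. -/
noncomputable def meanM {p : ℕ} (Φ : Fin p → (Fin p → ℕ) → ℝ) : Matrix (Fin p) (Fin p) ℝ :=
  fun k l => ∑' z : Fin p → ℕ, Φ k z * (z l : ℝ)

/-! With `D k = |A R_k (1 - f_{k,n}(s))|`, the relations `R_{k+1} = R_k M_k` and
`f_{k,n} = f_k ∘ f_{k+1,n}` turn the `k`-th summand into `1 / D k - 1 / D (k + 1)`, because
`e^{-ln |x R_k|} = 1 / |A R_k|` for the nonnegative matrices `R_k`. The sum telescopes to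
`1 / D 0 - 1 / D n`, and `D 0 = (x, 1 - f_{0,n}(s))` because `f_{0,n}(s)` stays in the unit cube. -/

theorem pgf_mem_Icc {p : ℕ} {Φ : (Fin p → ℕ) → ℝ} (hΦ : ∀ z, 0 ≤ Φ z) (hΦ1 : ∑' z, Φ z = 1)
    {t : Fin p → ℝ} (ht : ∀ j, 0 ≤ t j ∧ t j ≤ 1) : pgf Φ t ∈ Set.Icc 0 1 := by
  have hsum : Summable Φ := by
    by_contra h
    simp [tsum_eq_zero_of_not_summable h] at hΦ1
  have hprod : ∀ z : Fin p → ℕ, 0 ≤ ∏ j, t j ^ z j ∧ ∏ j, t j ^ z j ≤ 1 := fun z =>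
    ⟨prod_nonneg fun j _ => pow_nonneg (ht j).1 _,
      prod_le_one (fun j _ => pow_nonneg (ht j).1 _) fun j _ => pow_le_one₀ (ht j).1 (ht j).2⟩
  have hle : ∀ z : Fin p → ℕ, Φ z * ∏ j, t j ^ z j ≤ Φ z := fun z =>
    mul_le_of_le_one_right (hΦ z) (hprod z).2
  have hnn : ∀ z : Fin p → ℕ, 0 ≤ Φ z * ∏ j, t j ^ z j := fun z => mul_nonneg (hΦ z) (hprod z).1
  refine ⟨tsum_nonneg hnn, hΦ1 ▸ ?_⟩
  exact (Summable.of_nonneg_of_le hnn hle hsum).tsum_le_tsum hle hsum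

theorem mem_Icc_of_pgf_iterate {p n : ℕ} {Φ : ℕ → Fin p → (Fin p → ℕ) → ℝ}
    (hΦ : ∀ m i z, 0 ≤ Φ m i z) (hΦ1 : ∀ m i, ∑' z, Φ m i z = 1) {v : ℕ → Fin p → ℝ}
    (hvn : ∀ j, 0 ≤ v n j ∧ v n j ≤ 1) (hv : ∀ k < n, v k = fun i => pgf (Φ k i) (v (k + 1)))
    {k : ℕ} (hk : k ≤ n) (j : Fin p) : v k j ∈ Set.Icc 0 1 := by
  refine Nat.decreasingInduction (motive := fun k _ => ∀ j, v k j ∈ Set.Icc 0 1)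
    (fun k hk ih j => ?_) hvn hk j
  rw [hv k hk]
  exact pgf_mem_Icc (hΦ k j) (hΦ1 k j) ih

theorem meanM_nonneg {p : ℕ} {Φ : Fin p → (Fin p → ℕ) → ℝ} (hΦ : ∀ i z, 0 ≤ Φ i z)
    (i j : Fin p) : 0 ≤ meanM Φ i j :=
  tsum_nonneg fun z => mul_nonneg (hΦ i z) (Nat.cast_nonneg _)

theorem nonneg_of_eq_one_of_succ_eq_mul {p : ℕ} {M R : ℕ → Matrix (Fin p) (Fin p) ℝ}
    (hM : ∀ k i j, 0 ≤ M k i j) (hR0 : R 0 = 1) (hRsucc : ∀ k, R (k + 1) = R k * M k)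
    (k : ℕ) (i j : Fin p) : 0 ≤ R k i j := by
  induction k generalizing j with
  | zero => rw [hR0, one_apply]; split_ifs <;> norm_num
  | succ k ih =>
    rw [hRsucc, mul_apply]
    exact sum_nonneg fun l _ => mul_nonneg (ih l) (hM k l j)

theorem vnorm_nonneg {p : ℕ} (v : Fin p → ℝ) : 0 ≤ vnorm v :=
  sum_nonneg fun i _ => abs_nonneg (v i)

theorem vnorm_eq_sum {p : ℕ} {v : Fin p → ℝ} (hv : ∀ i, 0 ≤ v i) : vnorm v = ∑ i, v i :=
  sum_congr rfl fun i _ => abs_of_nonneg (hv i)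

theorem mnorm_diagonal_mul {p : ℕ} {x : Fin p → ℝ} (hx : ∀ i, 0 ≤ x i)
    {B : Matrix (Fin p) (Fin p) ℝ} (hB : ∀ i j, 0 ≤ B i j) :
    mnorm (diagonal x * B) = vnorm (vecMul x B) := by
  rw [vnorm_eq_sum (v := x ᵥ* B) fun j => dotProduct_nonneg_of_nonneg hx fun i => hB i j, mnorm]
  simp only [diagonal_mul, vecMul, dotProduct]
  exact sum_comm

theorem vnorm_diagonal_mulVec {p : ℕ} {x v : Fin p → ℝ} (hx : ∀ i, 0 ≤ x i)
    (hv : ∀ i, 0 ≤ v i) : vnorm (diagonal x *ᵥ v) = ∑ i, x i * v i := by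
  simp only [vnorm, mulVec_diagonal]
  exact sum_congr rfl fun i _ => abs_of_nonneg (mul_nonneg (hx i) (hv i))

theorem div_sub_div_mul_exp_neg_log {a b c : ℝ} (hc : 0 < c) :
    (c / a - c / b) * Real.exp (-Real.log c) = 1 / a - 1 / b := by
  rw [Real.exp_neg, Real.exp_log hc]
  field_simp

theorem stmt_8_general {p : ℕ} (n : ℕ)
    (Φ : ℕ → Fin p → (Fin p → ℕ) → ℝ)
    (hΦnn : ∀ m i z, 0 ≤ Φ m i z) (hΦprob : ∀ m i, ∑' z, Φ m i z = 1)
    (R : ℕ → Matrix (Fin p) (Fin p) ℝ) (hR0 : R 0 = 1)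
    (hRsucc : ∀ k, R (k + 1) = R k * meanM (Φ k))
    (comp : ℕ → (Fin p → ℝ) → (Fin p → ℝ))
    (s : Fin p → ℝ) (hs : ∀ j, 0 ≤ s j ∧ s j ≤ 1)
    (hcompn : comp n s = s)
    (hcomp : ∀ k, k < n → comp k s = fun i => pgf (Φ k i) (comp (k + 1) s))
    (x : Fin p → ℝ) (hx : ∀ i, 0 ≤ x i)
    (A : Matrix (Fin p) (Fin p) ℝ) (hAdiag : A = Matrix.diagonal x)
    -- all denominators are nonzero:
    (hdenn : vnorm ((A * R n).mulVec fun j => 1 - s j) ≠ 0)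
    (hxR : ∀ k, k ≤ n → vnorm (Matrix.vecMul x (R k)) ≠ 0) :
    1 / (∑ i, x i * (1 - comp 0 s i)) =
      Real.exp (-Real.log (vnorm ((A * R n).mulVec fun j => 1 - s j))) +
        ∑ k ∈ Finset.range n,
          (mnorm (A * R k) /
              vnorm ((A * R k).mulVec fun j => 1 - pgf (Φ k j) (comp (k + 1) s)) -
            mnorm (A * R k) /
              vnorm ((A * R k * meanM (Φ k)).mulVec fun j => 1 - comp (k + 1) s j)) *
            Real.exp (-Real.log (vnorm (Matrix.vecMul x (R k)))) := by
  have hRnn := nonneg_of_eq_one_of_succ_eq_mul (fun k => meanM_nonneg (hΦnn k)) hR0 hRsucc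
  have hterm : ∀ k ∈ range n,
      (mnorm (A * R k) / vnorm ((A * R k) *ᵥ fun j => 1 - pgf (Φ k j) (comp (k + 1) s)) -
        mnorm (A * R k) / vnorm ((A * R k * meanM (Φ k)) *ᵥ fun j => 1 - comp (k + 1) s j)) *
          Real.exp (-Real.log (vnorm (x ᵥ* R k))) =
        1 / vnorm ((A * R k) *ᵥ fun j => 1 - comp k s j) -
          1 / vnorm ((A * R (k + 1)) *ᵥ fun j => 1 - comp (k + 1) s j) := by
    intro k hk
    have hkn := mem_range.1 hk
    have hpgf : (fun j => 1 - pgf (Φ k j) (comp (k + 1) s)) = fun j => 1 - comp k s j := by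
      rw [hcomp k hkn]
    rw [hpgf, mul_assoc, ← hRsucc, hAdiag, mnorm_diagonal_mul hx (hRnn k)]
    exact div_sub_div_mul_exp_neg_log ((vnorm_nonneg _).lt_of_ne' (hxR k hkn.le))
  have hcomp0 := mem_Icc_of_pgf_iterate (v := fun k => comp k s) hΦnn hΦprob
    (by simpa only [hcompn] using hs) hcomp (Nat.zero_le n)
  rw [sum_congr rfl hterm,
    sum_range_sub' (fun k => 1 / vnorm ((A * R k) *ᵥ fun j => 1 - comp k s j)),
    Real.exp_neg, Real.exp_log ((vnorm_nonneg _).lt_of_ne' hdenn)]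
  simp only [hR0, hcompn, mul_one, hAdiag,
    vnorm_diagonal_mulVec hx fun i => sub_nonneg.2 (hcomp0 i).2]
  ring

/-- The telescoping identity (`Represent`) behind Corollary `C_telescope`. -/
theorem stmt_8 {p : ℕ} (hp : 1 ≤ p) (n : ℕ)
    (Φ : ℕ → Fin p → (Fin p → ℕ) → ℝ)
    (hΦnn : ∀ m i z, 0 ≤ Φ m i z) (hΦprob : ∀ m i, ∑' z, Φ m i z = 1)
    (hmom : ∀ m i j, Summable fun z : Fin p → ℕ => Φ m i z * (z j : ℝ))
    (R : ℕ → Matrix (Fin p) (Fin p) ℝ) (hR0 : R 0 = 1)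
    (hRsucc : ∀ k, R (k + 1) = R k * meanM (Φ k))
    (comp : ℕ → (Fin p → ℝ) → (Fin p → ℝ))
    (s : Fin p → ℝ) (hs : ∀ j, 0 ≤ s j ∧ s j ≤ 1)
    (hcompn : comp n s = s)
    (hcomp : ∀ k, k < n → comp k s = fun i => pgf (Φ k i) (comp (k + 1) s))
    (x : Fin p → ℝ) (hx : ∀ i, 0 ≤ x i) (hxnorm : ∑ i, x i = 1)
    (A : Matrix (Fin p) (Fin p) ℝ) (hAdiag : A = Matrix.diagonal x)
    -- all denominators are nonzero:
    (h0 : (∑ i, x i * (1 - comp 0 s i)) ≠ 0)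
    (hdenn : vnorm ((A * R n).mulVec fun j => 1 - s j) ≠ 0)
    (hxR : ∀ k, k ≤ n → vnorm (Matrix.vecMul x (R k)) ≠ 0)
    (hden1 : ∀ k, k < n →
      vnorm ((A * R k).mulVec fun j => 1 - pgf (Φ k j) (comp (k + 1) s)) ≠ 0)
    (hden2 : ∀ k, k < n →
      vnorm ((A * R k * meanM (Φ k)).mulVec fun j => 1 - comp (k + 1) s j) ≠ 0) :
    1 / (∑ i, x i * (1 - comp 0 s i)) =
      Real.exp (-Real.log (vnorm ((A * R n).mulVec fun j => 1 - s j))) +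
        ∑ k ∈ Finset.range n,
          (mnorm (A * R k) /
              vnorm ((A * R k).mulVec fun j => 1 - pgf (Φ k j) (comp (k + 1) s)) -
            mnorm (A * R k) /
              vnorm ((A * R k * meanM (Φ k)).mulVec fun j => 1 - comp (k + 1) s j)) *
            Real.exp (-Real.log (vnorm (Matrix.vecMul x (R k)))) :=
  stmt_8_general n Φ hΦnn hΦprob R hR0 hRsucc comp s hs hcompn hcomp x hx A hAdiag hdenn hxR
end
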